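/- arXiv:2411.07955 — 4 statements merged into one kernel-verified Lean document; each statement's English description precedes it below -/
import Mathlib

section
/- Refutational completeness of resolution: a formula F is unsatisfiable if and only if there exists a resolution proof of F, i.e., the empty clause ⊥ can be derived from the clauses of F by repeated application of the resolution rule. -/
open scoped Classical

noncomputable section

abbrev Var := ℕ
abbrev Lit := Var × Bool

/-- A clause: a finite set of literals containing no variable together with its negation. -/
abbrev Clause := {s : Finset Lit // ∀ v : Var, ¬((v, true) ∈ s ∧ (v, false) ∈ s)}

/-- The empty clause ⊥. -/
def emptyClause : Clause := ⟨∅, by simp⟩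

abbrev CFormula := Finset Clause
abbrev Model := Var → Bool

/-- A model satisfies a clause if some literal evaluates to true under it. -/
def SatClause (m : Model) (C : Clause) : Prop := ∃ l ∈ C.1, m l.1 = l.2

/-- A model satisfies a formula if it satisfies every clause. -/
def SatFormula (m : Model) (F : CFormula) : Prop := ∀ C ∈ F, SatClause m C

def Satisfiable (F : CFormula) : Prop := ∃ m, SatFormula m F

def Unsat (F : CFormula) : Prop := ¬ Satisfiable F

/-- `IsResolvent A B R` : `R = A ⋄ B` with some pivot variable `x`: `x ∈ A`, `x̄ ∈ B`,
no other variable occurs with opposite polarities in `A` and `B`, and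
`R = (A ∖ {x}) ∪ (B ∖ {x̄})`. -/
def IsResolvent (A B R : Clause) : Prop :=
  ∃ x : Var, (x, true) ∈ A.1 ∧ (x, false) ∈ B.1 ∧
    (∀ y : Var,
      (((y, true) ∈ A.1 ∧ (y, false) ∈ B.1) ∨ ((y, false) ∈ A.1 ∧ (y, true) ∈ B.1)) → y = x) ∧
    R.1 = (A.1.erase (x, true)) ∪ (B.1.erase (x, false))

/-- A resolution proof of `F`: a nonempty sequence of clauses ending in the empty clause
where each entry is an axiom (a clause of `F`) or a resolvent of two earlier entries. -/
def IsResProof (F : CFormula) (Q : List Clause) : Prop :=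
  Q ≠ [] ∧ Q.getLast? = some emptyClause ∧
  ∀ i : Fin Q.length, Q.get i ∈ F ∨
    ∃ j k : Fin Q.length, j < i ∧ k < i ∧ IsResolvent (Q.get j) (Q.get k) (Q.get i)

/-- `layersUpTo L j = L⁰ ∪ ⋯ ∪ L^{j-1}`. -/
def layersUpTo (L : List CFormula) (j : ℕ) : CFormula :=
  (Finset.range j).biUnion fun i => L.getD i ∅

/-- `tailUnion L = L¹ ∪ ⋯ ∪ Lⁿ`. -/
def tailUnion (L : List CFormula) : CFormula :=
  (Finset.Ico 1 L.length).biUnion fun i => L.getD i ∅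

/-- A layer list on `F`: initialization, termination, consistency, take-it-or-leave-it. -/
def IsLayerList (F : CFormula) (L : List CFormula) : Prop :=
  L.head? = some F ∧
  (∃ k, 1 ≤ k ∧ k < L.length ∧ emptyClause ∈ L.getD k ∅) ∧
  (∀ j, 1 ≤ j → j < L.length → ∀ ω ∈ L.getD j ∅,
      ∃ ω' ∈ L.getD (j - 1) ∅, ∃ ω'' ∈ layersUpTo L j, IsResolvent ω' ω'' ω) ∧
  (∀ k j, 1 ≤ k → k < j → j < L.length → ∀ ω ∈ L.getD j ∅,
      ¬ ∃ ω' ∈ L.getD (k - 1) ∅, ∃ ω'' ∈ layersUpTo L k, IsResolvent ω' ω'' ω)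

/-- The length of a layer list: the total number of clauses in all its layers. -/
def llLength (L : List CFormula) : ℕ := (L.map Finset.card).sum

/-- The frontier of `F`: clauses of `F` not strictly containing another clause of `F`. -/
def Frontier (F : CFormula) : CFormula := F.filter fun ω => ¬ ∃ ω' ∈ F, ω'.1 ⊂ ω.1

/-- A subproblem: previous, current, next and forgotten clause sets. -/
structure Subproblem where
  previous : CFormula
  current : CFormula
  next : CFormula
  forgotten : CFormula

/-- The known clauses of a subproblem. -/
def Subproblem.known (P : Subproblem) : CFormula := P.previous ∪ P.current ∪ P.next

/-- A compatible proof of a subproblem `P`: a layer list on `F` such that for some `k`,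
`L^k = Current(P)`, `L⁰ ∪ ⋯ ∪ L^{k-1} = Previous(P)`, `L^{k+1} ⊇ Next(P)`, and no
forgotten clause occurs in any layer. -/
def CompatibleProof (F : CFormula) (P : Subproblem) (L : List CFormula) : Prop :=
  IsLayerList F L ∧
  (∃ k, k < L.length ∧ L.getD k ∅ = P.current ∧ layersUpTo L k = P.previous ∧
      P.next ⊆ L.getD (k + 1) ∅) ∧
  ∀ ω ∈ P.forgotten, ω ∉ layersUpTo L L.length

/-! Soundness holds because a resolvent is true in every model of its two premises.
For completeness we prove more: if every model of `F` satisfies a consistent set of literals `s`,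
then some clause `D ⊆ s` is derivable from `F`. Induct on the number of variables of `F` not
occurring in `s`. If there is none, the model falsifying `s` falsifies a clause of `F`, and that
clause lies in `s`. Otherwise pick such a variable `x`, get derivable `A ⊆ s ∪ {x}` and
`B ⊆ s ∪ {x̄}`, and resolve them on `x`; the pivot is the only clash because `s` is consistent.
Taking `s = ∅` turns unsatisfiability into a derivation of `⊥`. -/
def IsConsistent (s : Finset Lit) : Prop := ∀ v : Var, ¬((v, true) ∈ s ∧ (v, false) ∈ s)

inductive Derivable (F : CFormula) : Clause → Prop
  | of_mem {C : Clause} : C ∈ F → Derivable F C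
  | resolve {A B C : Clause} : Derivable F A → Derivable F B → IsResolvent A B C → Derivable F C

theorem SatClause.of_isResolvent {m : Model} {A B R : Clause} (h : IsResolvent A B R)
    (hA : SatClause m A) (hB : SatClause m B) : SatClause m R := by
  obtain ⟨x, -, -, -, hR⟩ := h
  obtain ⟨a, haA, hma⟩ := hA
  obtain ⟨b, hbB, hmb⟩ := hB
  by_cases hax : a = (x, true)
  · have hbx : b ≠ (x, false) := by rintro rfl; subst hax; simp_all
    exact ⟨b, hR ▸ Finset.mem_union_right _ (Finset.mem_erase.2 ⟨hbx, hbB⟩), hmb⟩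
  · exact ⟨a, hR ▸ Finset.mem_union_left _ (Finset.mem_erase.2 ⟨hax, haA⟩), hma⟩

theorem Derivable.satClause {F : CFormula} {C : Clause} (h : Derivable F C) {m : Model}
    (hm : SatFormula m F) : SatClause m C := by
  induction h with
  | of_mem hC => exact hm _ hC
  | resolve _ _ hres ihA ihB => exact ihA.of_isResolvent hres ihB

theorem unsat_of_derivable_empty {F : CFormula} (h : Derivable F emptyClause) : Unsat F := by
  rintro ⟨m, hm⟩
  obtain ⟨l, hl, -⟩ := h.satClause hm
  simp [emptyClause] at hl

def vars (F : CFormula) : Finset Var := F.biUnion fun C => C.1.image Prod.fst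

def falsifier (s : Finset Lit) : Model := fun v => decide ((v, false) ∈ s)

theorem falsifier_ne_of_mem {s : Finset Lit} (hs : IsConsistent s) {l : Lit} (hl : l ∈ s) :
    falsifier s l.1 ≠ l.2 := by
  obtain ⟨v, _ | _⟩ := l <;> simp_all [falsifier, IsConsistent]

theorem mem_of_falsifier_ne {s : Finset Lit} {l : Lit} (hl : l.1 ∈ s.image Prod.fst)
    (hne : falsifier s l.1 ≠ l.2) : l ∈ s := by
  obtain ⟨⟨v, b⟩, hvb, rfl⟩ := Finset.mem_image.1 hl
  obtain ⟨_, c⟩ := l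
  cases b <;> cases c <;> simp_all [falsifier]

theorem exists_isResolvent_subset {s : Finset Lit} (hs : IsConsistent s) {x : Var}
    {A B : Clause} (hA : A.1 ⊆ insert (x, true) s) (hB : B.1 ⊆ insert (x, false) s)
    (hxA : (x, true) ∈ A.1) (hxB : (x, false) ∈ B.1) :
    ∃ R : Clause, IsResolvent A B R ∧ R.1 ⊆ s := by
  rw [Finset.subset_insert_iff] at hA hB
  have hsub := Finset.union_subset hA hB
  refine ⟨⟨_, fun v hv => hs v ⟨hsub hv.1, hsub hv.2⟩⟩, ⟨x, hxA, hxB, ?_, rfl⟩, hsub⟩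
  by_contra! ⟨y, hy, hyx⟩
  have hmem {C : Clause} {b c : Bool} (hC : C.1.erase (x, b) ⊆ s) (hyc : (y, c) ∈ C.1) :
      (y, c) ∈ s :=
    hC (Finset.mem_erase.2 ⟨by simp [hyx], hyc⟩)
  rcases hy with ⟨h₁, h₂⟩ | ⟨h₁, h₂⟩
  · exact hs y ⟨hmem hA h₁, hmem hB h₂⟩
  · exact hs y ⟨hmem hB h₂, hmem hA h₁⟩

theorem exists_derivable_subset_of_entails {F : CFormula} {s : Finset Lit} (hs : IsConsistent s)
    (hFs : ∀ m, SatFormula m F → SatClause m ⟨s, hs⟩) :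
    ∃ D : Clause, Derivable F D ∧ D.1 ⊆ s := by
  by_cases hvars : vars F ⊆ s.image Prod.fst
  · have hfalse : ¬SatFormula (falsifier s) F := fun hm => by
      obtain ⟨l, hl, hml⟩ := hFs _ hm
      exact falsifier_ne_of_mem hs hl hml
    obtain ⟨D, hD, hfD⟩ := not_forall₂.1 hfalse
    refine ⟨D, .of_mem hD, fun l hl => mem_of_falsifier_ne ?_ fun hml => hfD ⟨l, hl, hml⟩⟩
    exact hvars (Finset.mem_biUnion.2 ⟨D, hD, Finset.mem_image_of_mem _ hl⟩)
  obtain ⟨x, hxF, hxs⟩ := Finset.not_subset.1 hvars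
  have hx (c : Bool) : (x, c) ∉ s := fun h => hxs (Finset.mem_image_of_mem Prod.fst h)
  have hext (b : Bool) : IsConsistent (insert (x, b) s) := by
    rintro v ⟨hvt, hvf⟩
    grind [IsConsistent]
  have hext_entails (b : Bool) (m : Model) (hm : SatFormula m F) :
      SatClause m ⟨insert (x, b) s, hext b⟩ :=
    let ⟨l, hl, hml⟩ := hFs m hm; ⟨l, Finset.mem_insert_of_mem hl, hml⟩
  obtain ⟨A, hA, hAs⟩ := exists_derivable_subset_of_entails (hext true) (hext_entails true)
  obtain ⟨B, hB, hBs⟩ := exists_derivable_subset_of_entails (hext false) (hext_entails false)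
  by_cases hxA : (x, true) ∈ A.1
  swap
  · exact ⟨A, hA, (Finset.subset_insert_iff_of_notMem hxA).1 hAs⟩
  by_cases hxB : (x, false) ∈ B.1
  swap
  · exact ⟨B, hB, (Finset.subset_insert_iff_of_notMem hxB).1 hBs⟩
  obtain ⟨R, hR, hRs⟩ := exists_isResolvent_subset hs hAs hBs hxA hxB
  exact ⟨R, hA.resolve hB hR, hRs⟩
termination_by (vars F \ s.image Prod.fst).card
decreasing_by
  all_goals
    rw [Finset.image_insert, Finset.sdiff_insert]
    exact Finset.card_erase_lt_of_mem (Finset.mem_sdiff.2 ⟨hxF, hxs⟩)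

theorem unsat_iff_derivable_empty {F : CFormula} : Unsat F ↔ Derivable F emptyClause := by
  refine ⟨fun hF => ?_, unsat_of_derivable_empty⟩
  obtain ⟨D, hD, hDs⟩ := exists_derivable_subset_of_entails (s := ∅) (by simp [IsConsistent])
    (fun m hm => absurd ⟨m, hm⟩ hF)
  rwa [show D = emptyClause from Subtype.ext (Finset.subset_empty.1 hDs)] at hD

inductive IsDerivationList (F : CFormula) : List Clause → Prop
  | nil : IsDerivationList F []
  | snoc {Q : List Clause} {C : Clause} : IsDerivationList F Q →
      (C ∈ F ∨ ∃ A ∈ Q, ∃ B ∈ Q, IsResolvent A B C) → IsDerivationList F (Q ++ [C])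

namespace IsDerivationList

variable {F : CFormula}

theorem append {Q₁ Q₂ : List Clause} (h₁ : IsDerivationList F Q₁) (h₂ : IsDerivationList F Q₂) :
    IsDerivationList F (Q₁ ++ Q₂) := by
  induction h₂ with
  | nil => simpa
  | snoc _ hC ih =>
    rw [← List.append_assoc]
    refine ih.snoc (hC.imp_right ?_)
    rintro ⟨A, hA, B, hB, hR⟩
    exact ⟨A, List.mem_append_right _ hA, B, List.mem_append_right _ hB, hR⟩

theorem isResProof_steps {Q : List Clause} (h : IsDerivationList F Q) (i : Fin Q.length) :
    Q.get i ∈ F ∨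
      ∃ j k : Fin Q.length, j < i ∧ k < i ∧ IsResolvent (Q.get j) (Q.get k) (Q.get i) := by
  induction h with
  | nil => exact i.elim0
  | @snoc Q C _ hC ih =>
    obtain ⟨i, hi⟩ := i
    have hget (n : ℕ) (hn : n < Q.length) :
        (Q ++ [C]).get ⟨n, by simp; omega⟩ = Q.get ⟨n, hn⟩ :=
      List.getElem_append_left hn
    rw [List.length_append, List.length_singleton] at hi
    rcases Nat.lt_succ_iff_lt_or_eq.1 hi with hi | rfl
    · rcases ih ⟨i, hi⟩ with hmem | ⟨j, k, hj, hk, hR⟩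
      · exact .inl (by rwa [hget])
      · exact .inr ⟨⟨j, by simp⟩, ⟨k, by simp⟩, hj, hk, by rwa [hget, hget, hget]⟩
    · have hlast : (Q ++ [C]).get ⟨Q.length, by simp⟩ = C := by simp
      rw [hlast]
      refine hC.imp_right ?_
      rintro ⟨A, hA, B, hB, hR⟩
      obtain ⟨j, rfl⟩ := List.mem_iff_get.1 hA
      obtain ⟨k, rfl⟩ := List.mem_iff_get.1 hB
      exact ⟨⟨j, by simp⟩, ⟨k, by simp⟩, j.2, k.2, by rwa [hget, hget]⟩

end IsDerivationList

theorem Derivable.exists_isDerivationList {F : CFormula} {C : Clause} (h : Derivable F C) :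
    ∃ Q, IsDerivationList F Q ∧ Q.getLast? = some C := by
  induction h with
  | of_mem hC => exact ⟨[_], IsDerivationList.nil.snoc (.inl hC), rfl⟩
  | resolve _ _ hR ihA ihB =>
    obtain ⟨QA, hQA, hA⟩ := ihA
    obtain ⟨QB, hQB, hB⟩ := ihB
    exact ⟨QA ++ QB ++ [_], (hQA.append hQB).snoc <| .inr
      ⟨_, List.mem_append_left _ (List.mem_of_getLast? hA),
        _, List.mem_append_right _ (List.mem_of_getLast? hB), hR⟩, List.getLast?_concat⟩

theorem IsResProof.derivable_empty {F : CFormula} {Q : List Clause} (h : IsResProof F Q) :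
    Derivable F emptyClause := by
  obtain ⟨-, hlast, hsteps⟩ := h
  have hder (i : Fin Q.length) : Derivable F (Q.get i) := by
    induction i using WellFoundedLT.induction with
    | _ i ih =>
      rcases hsteps i with hi | ⟨j, k, hj, hk, hR⟩
      exacts [.of_mem hi, (ih j hj).resolve (ih k hk) hR]
  obtain ⟨i, hi⟩ := List.mem_iff_get.1 (List.mem_of_getLast? hlast)
  exact hi ▸ hder i

/-- Refutational completeness of resolution. -/
theorem resolution_complete (F : CFormula) :
    Unsat F ↔ ∃ Q : List Clause, IsResProof F Q := by
  rw [unsat_iff_derivable_empty]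
  refine ⟨fun h => ?_, fun ⟨Q, hQ⟩ => hQ.derivable_empty⟩
  obtain ⟨Q, hQ, hlast⟩ := h.exists_isDerivationList
  exact ⟨Q, by rintro rfl; simp at hlast, hlast, hQ.isResProof_steps⟩

end
end

section
/- Frontier sufficiency: if an UNSAT formula F has a resolution proof with K derived (non-axiom) entries, then Frontier(F) is UNSAT and has a resolution proof with at most K derived (non-axiom) entries. -/
open scoped Classical

noncomputable section

/-! Replace every axiom of a resolution proof by a frontier clause contained in it and push the
change forward entry by entry. If the shrunken premises of a resolution step still both carry the
pivot literals, they resolve to a subclause of the original resolvent; otherwise one of them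
already avoids the pivot and is itself a subclause of the resolvent, so it can be repeated.
The resulting sequence has the same length, ends in ⊥, and its axiom positions are frontier
clauses, so it has no more derived entries than the original proof. -/

theorem List.Forall₂.exists_mem_right {α β : Type*} {R : α → β → Prop} {l₁ : List α}
    {l₂ : List β} (h : List.Forall₂ R l₁ l₂) {a : α} (ha : a ∈ l₁) : ∃ b ∈ l₂, R a b := by
  induction h with
  | nil => simp at ha
  | cons hab _ ih =>
    rcases List.mem_cons.1 ha with rfl | ha
    · exact ⟨_, List.mem_cons_self, hab⟩
    · obtain ⟨b, hb, hab⟩ := ih ha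
      exact ⟨b, List.mem_cons_of_mem _ hb, hab⟩

theorem List.Forall₂.length_filter_le {α β : Type*} {R : α → β → Prop} {l₁ : List α}
    {l₂ : List β} (h : List.Forall₂ R l₁ l₂) {p : α → Bool} {q : β → Bool}
    (hpq : ∀ a b, R a b → q b → p a) : (l₂.filter q).length ≤ (l₁.filter p).length := by
  induction h with
  | nil => simp
  | @cons a b _ _ hab _ ih =>
    by_cases hb : q b
    · simp [hb, hpq a b hab hb, ih]
    · rw [List.filter_cons_of_neg hb]
      exact ih.trans ((List.sublist_cons_self a _).filter p).length_le

theorem List.Forall₂.exists_getLast?_eq_some {α β : Type*} {R : α → β → Prop} {l₁ : List α}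
    {l₂ : List β} (h : List.Forall₂ R l₁ l₂) {a : α} (ha : l₁.getLast? = some a) :
    ∃ b, l₂.getLast? = some b ∧ R a b := by
  rw [List.getLast?_eq_head?_reverse] at ha ⊢
  have h' := List.rel_reverse h
  generalize l₁.reverse = r₁ at h' ha
  generalize l₂.reverse = r₂ at h' ⊢
  cases h' with
  | nil => cases ha
  | cons hab _ => exact ⟨_, rfl, Option.some.inj ha ▸ hab⟩

theorem exists_mem_frontier_subset {F : CFormula} {C : Clause} (hC : C ∈ F) :
    ∃ C' ∈ Frontier F, C'.1 ⊆ C.1 := by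
  obtain ⟨C', hle, hmin⟩ := exists_minimal_le_of_wellFoundedLT (· ∈ F) C hC
  refine ⟨C', Finset.mem_filter.2 ⟨hmin.prop, ?_⟩, hle⟩
  rintro ⟨C'', hC'', hlt⟩
  exact hlt.not_subset (hmin.le_of_le hC'' hlt.subset)

theorem SatClause.mono {m : Model} {C C' : Clause} (h : SatClause m C') (hsub : C'.1 ⊆ C.1) :
    SatClause m C :=
  let ⟨l, hl, hval⟩ := h
  ⟨l, hsub hl, hval⟩

theorem Unsat.frontier {F : CFormula} (hF : Unsat F) : Unsat (Frontier F) := by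
  rintro ⟨m, hm⟩
  refine hF ⟨m, fun C hC => ?_⟩
  obtain ⟨C', hC', hsub⟩ := exists_mem_frontier_subset hC
  exact (hm C' hC').mono hsub

theorem IsResolvent.subset_or_exists_resolvent_subset {A B R A' B' : Clause}
    (h : IsResolvent A B R) (hA : A'.1 ⊆ A.1) (hB : B'.1 ⊆ B.1) :
    A'.1 ⊆ R.1 ∨ B'.1 ⊆ R.1 ∨ ∃ R' : Clause, R'.1 ⊆ R.1 ∧ IsResolvent A' B' R' := by
  obtain ⟨x, hxA, hxB, huniq, hR⟩ := h
  by_cases hxA' : (x, true) ∈ A'.1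
  · by_cases hxB' : (x, false) ∈ B'.1
    · have hsub : A'.1.erase (x, true) ∪ B'.1.erase (x, false) ⊆ R.1 :=
        hR ▸ Finset.union_subset_union (Finset.erase_subset_erase _ hA)
          (Finset.erase_subset_erase _ hB)
      refine Or.inr (Or.inr ⟨⟨_, fun v hv => R.2 v ⟨hsub hv.1, hsub hv.2⟩⟩, hsub,
        x, hxA', hxB', fun y hy => huniq y ?_, rfl⟩)
      exact hy.imp (And.imp (@hA _) (@hB _)) (And.imp (@hA _) (@hB _))
    · refine Or.inr (Or.inl fun l hl => hR ▸ Finset.mem_union_right _ ?_)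
      exact Finset.mem_erase.2 ⟨by rintro rfl; exact hxB' hl, hB hl⟩
  · refine Or.inl fun l hl => hR ▸ Finset.mem_union_left _ ?_
    exact Finset.mem_erase.2 ⟨by rintro rfl; exact hxA' hl, hA hl⟩

def Inferable (F : CFormula) (Q : List Clause) (C : Clause) : Prop :=
  C ∈ F ∨ ∃ A ∈ Q, ∃ B ∈ Q, IsResolvent A B C

def IsDerivation (F : CFormula) (Q : List Clause) : Prop :=
  ∀ i : Fin Q.length, Q.get i ∈ F ∨
    ∃ j k : Fin Q.length, j < i ∧ k < i ∧ IsResolvent (Q.get j) (Q.get k) (Q.get i)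

theorem IsDerivation.inferable_of_mem {F : CFormula} {Q : List Clause} (hQ : IsDerivation F Q)
    {C : Clause} (hC : C ∈ Q) : Inferable F Q C := by
  obtain ⟨i, rfl⟩ := List.mem_iff_get.1 hC
  exact (hQ i).imp_right fun ⟨j, k, _, _, h⟩ => ⟨_, List.get_mem _ _, _, List.get_mem _ _, h⟩

theorem isDerivation_append_singleton {F : CFormula} {Q : List Clause} {C : Clause} :
    IsDerivation F (Q ++ [C]) ↔ IsDerivation F Q ∧ Inferable F Q C := by
  have get_left (i : Fin (Q ++ [C]).length) (hi : (i : ℕ) < Q.length) :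
      (Q ++ [C]).get i = Q.get ⟨i, hi⟩ := by
    simp [List.getElem_append_left hi]
  have get_last : (Q ++ [C]).get ⟨Q.length, by simp⟩ = C := by simp
  constructor
  · intro h
    refine ⟨fun i => ?_, ?_⟩
    · rcases h ⟨i, by simp⟩ with hi | ⟨j, k, hj, hk, hres⟩
      · exact Or.inl (by rwa [get_left _ i.isLt] at hi)
      · have hjQ : (j : ℕ) < Q.length := lt_trans hj i.isLt
        have hkQ : (k : ℕ) < Q.length := lt_trans hk i.isLt
        refine Or.inr ⟨⟨j, hjQ⟩, ⟨k, hkQ⟩, hj, hk, ?_⟩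
        rwa [get_left _ hjQ, get_left _ hkQ, get_left _ i.isLt] at hres
    · rcases h ⟨Q.length, by simp⟩ with hC | ⟨j, k, hj, hk, hres⟩
      · exact Or.inl (get_last ▸ hC)
      · rw [get_left j hj, get_left k hk, get_last] at hres
        exact Or.inr ⟨_, List.get_mem _ _, _, List.get_mem _ _, hres⟩
  · rintro ⟨hQ, hC⟩ i
    rcases Nat.lt_succ_iff_lt_or_eq.1 (by simpa using i.isLt) with hi | hi
    · rcases hQ ⟨i, hi⟩ with h | ⟨j, k, hj, hk, hres⟩
      · exact Or.inl (by rwa [get_left _ hi])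
      · refine Or.inr ⟨⟨j, by simp⟩, ⟨k, by simp⟩, hj, hk, ?_⟩
        rwa [get_left _ j.isLt, get_left _ k.isLt, get_left _ hi]
    · obtain rfl : i = ⟨Q.length, by simp⟩ := Fin.ext hi
      rw [get_last]
      rcases hC with hC | ⟨A, hA, B, hB, hres⟩
      · exact Or.inl hC
      · obtain ⟨j, rfl⟩ := List.mem_iff_get.1 hA
        obtain ⟨k, rfl⟩ := List.mem_iff_get.1 hB
        refine Or.inr ⟨⟨j, by simp⟩, ⟨k, by simp⟩, j.isLt, k.isLt, ?_⟩
        rwa [get_left _ j.isLt, get_left _ k.isLt]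

section Subsumption

variable {F G : CFormula}

def IsSubsumedBy (F G : CFormula) (C C' : Clause) : Prop := C'.1 ⊆ C.1 ∧ (C ∈ F → C' ∈ G)

theorem Inferable.exists_isSubsumedBy (hFG : ∀ C ∈ F, ∃ C' ∈ G, C'.1 ⊆ C.1) {Q Q' : List Clause}
    (hQ' : IsDerivation G Q') (hrel : List.Forall₂ (IsSubsumedBy F G) Q Q') {C : Clause}
    (hC : Inferable F Q C) :
    ∃ C', IsSubsumedBy F G C C' ∧ Inferable G Q' C' := by
  by_cases hCF : C ∈ F
  · obtain ⟨C', hC'G, hsub⟩ := hFG C hCF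
    exact ⟨C', ⟨hsub, fun _ => hC'G⟩, Or.inl hC'G⟩
  obtain ⟨A, hA, B, hB, hres⟩ := hC.resolve_left hCF
  obtain ⟨A', hA', hAA', -⟩ := hrel.exists_mem_right hA
  obtain ⟨B', hB', hBB', -⟩ := hrel.exists_mem_right hB
  rcases hres.subset_or_exists_resolvent_subset hAA' hBB' with hsub | hsub | ⟨R', hsub, hres'⟩
  · exact ⟨A', ⟨hsub, (absurd · hCF)⟩, hQ'.inferable_of_mem hA'⟩
  · exact ⟨B', ⟨hsub, (absurd · hCF)⟩, hQ'.inferable_of_mem hB'⟩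
  · exact ⟨R', ⟨hsub, (absurd · hCF)⟩, Or.inr ⟨A', hA', B', hB', hres'⟩⟩

theorem IsDerivation.exists_isSubsumedBy (hFG : ∀ C ∈ F, ∃ C' ∈ G, C'.1 ⊆ C.1) {Q : List Clause}
    (hQ : IsDerivation F Q) :
    ∃ Q', IsDerivation G Q' ∧ List.Forall₂ (IsSubsumedBy F G) Q Q' := by
  induction Q using List.reverseRecOn with
  | nil => exact ⟨[], fun i => i.elim0, .nil⟩
  | append_singleton Q C ih =>
    obtain ⟨hQ, hC⟩ := isDerivation_append_singleton.1 hQ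
    obtain ⟨Q', hQ', hrel⟩ := ih hQ
    obtain ⟨C', hCC', hC'⟩ := hC.exists_isSubsumedBy hFG hQ' hrel
    exact ⟨Q' ++ [C'], isDerivation_append_singleton.2 ⟨hQ', hC'⟩,
      List.rel_append hrel (.cons hCC' .nil)⟩

end Subsumption

/-- Frontier sufficiency. -/
theorem frontier_sufficiency (F : CFormula) (hF : Unsat F) (K : ℕ)
    (Q : List Clause) (hQ : IsResProof F Q)
    (hK : (Q.filter fun C => C ∉ F).length = K) :
    Unsat (Frontier F) ∧ ∃ Q' : List Clause, IsResProof (Frontier F) Q' ∧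
      (Q'.filter fun C => C ∉ Frontier F).length ≤ K := by
  obtain ⟨-, hlast, hQ⟩ : Q ≠ [] ∧ Q.getLast? = some emptyClause ∧ IsDerivation F Q := hQ
  obtain ⟨Q', hQ', hrel⟩ :=
    IsDerivation.exists_isSubsumedBy (fun _ => exists_mem_frontier_subset) hQ
  have hlast' : Q'.getLast? = some emptyClause := by
    obtain ⟨C, hC, hsub, -⟩ := hrel.exists_getLast?_eq_some hlast
    exact hC ▸ congrArg some (Subtype.ext (Finset.subset_empty.1 hsub))
  refine ⟨hF.frontier, Q', ⟨?_, hlast', hQ'⟩, hK ▸ hrel.length_filter_le ?_⟩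
  · rintro rfl; simp at hlast'
  · intro C C' hCC' hC'
    simpa using mt hCC'.2 (by simpa using hC')

end
end

section
/- MUS proof-length lower bound: every resolution proof of a minimally unsatisfiable formula F has length at least 2·#F − 1; more precisely, every clause of F occurs among its entries, and the set of distinct derived clauses (entries not belonging to F) has cardinality at least #F − 1. -/
open scoped Classical

noncomputable section

/-- A formula is minimally unsatisfiable if it is UNSAT and removing any clause makes it
satisfiable. -/
def MinimallyUnsat (F : CFormula) : Prop := Unsat F ∧ ∀ ω ∈ F, Satisfiable (F.erase ω)

/-!
Fix, for every derived clause of a resolution proof, one pair of premises occurring earlier, and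
follow these pairs down from `⊥`. Every reachable clause other than `⊥` is one of the two chosen
premises of a reachable derived clause, so with `d` reachable derived clauses at most `2d + 1`
clauses are reachable. If some `ω ∈ F` were not reachable, a model of `F ∖ {ω}` would satisfy
every reachable clause by soundness of resolution, `⊥` included. Hence `#F + d ≤ 2d + 1`.
-/

theorem List.idxOf_getElem_le {α : Type*} [BEq α] [LawfulBEq α] (l : List α) (i : ℕ)
    (h : i < l.length) : l.idxOf l[i] ≤ i :=
  Nat.le_of_not_lt fun hi => by simpa using List.not_of_lt_findIdx hi

theorem card_le_two_mul_card_sdiff_add_one {α : Type*} [DecidableEq α] {U A : Finset α} (r : α)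
    (g : α → α × α) (hU : ∀ c ∈ U, c = r ∨ ∃ d ∈ U \ A, c = (g d).1 ∨ c = (g d).2) :
    U.card ≤ 2 * (U \ A).card + 1 := by
  have hsub : U ⊆ insert r ((U \ A).biUnion fun d => {(g d).1, (g d).2}) := by
    intro c hc
    rcases hU c hc with rfl | ⟨d, hd, hcd⟩
    · exact Finset.mem_insert_self _ _
    · exact Finset.mem_insert_of_mem (Finset.mem_biUnion.2 ⟨d, hd, by simpa using hcd⟩)
  calc U.card ≤ ((U \ A).biUnion fun d => {(g d).1, (g d).2}).card + 1 :=
        (Finset.card_le_card hsub).trans (Finset.card_insert_le _ _)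
    _ ≤ (∑ d ∈ U \ A, ({(g d).1, (g d).2} : Finset α).card) + 1 := by
        gcongr; exact Finset.card_biUnion_le
    _ ≤ 2 * (U \ A).card + 1 := by
        gcongr
        simpa [mul_comm] using
          Finset.sum_le_card_nsmul (U \ A) _ 2 fun _ _ => Finset.card_le_two

theorem not_satClause_emptyClause (m : Model) : ¬ SatClause m emptyClause := by
  simp [SatClause, emptyClause]

theorem IsResolvent.satClause {A B R : Clause} (h : IsResolvent A B R) {m : Model}
    (hA : SatClause m A) (hB : SatClause m B) : SatClause m R := by
  obtain ⟨x, -, -, -, hR⟩ := h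
  obtain ⟨l, hlA, hlm⟩ := hA
  obtain ⟨l', hlB, hlm'⟩ := hB
  rw [SatClause, hR]
  by_cases hl : l = (x, true)
  · refine ⟨l', Finset.mem_union_right _ (Finset.mem_erase.2 ⟨?_, hlB⟩), hlm'⟩
    rintro rfl
    simp_all
  · exact ⟨l, Finset.mem_union_left _ (Finset.mem_erase.2 ⟨hl, hlA⟩), hlm⟩

def IsPremisePair (Q : List Clause) (c : Clause) (p : Clause × Clause) : Prop :=
  Q.idxOf p.1 < Q.idxOf c ∧ Q.idxOf p.2 < Q.idxOf c ∧ IsResolvent p.1 p.2 c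

def premises (Q : List Clause) (c : Clause) : Clause × Clause :=
  if h : ∃ p, IsPremisePair Q c p then h.choose else (c, c)

/-- Only the chosen premise pair of each derived clause is followed, so every reachable clause
has at most two reachable premises. -/
inductive Reachable (F : CFormula) (Q : List Clause) : Clause → Prop
  | emptyClause : Reachable F Q emptyClause
  | fst {c : Clause} : Reachable F Q c → c ∉ F → Reachable F Q (premises Q c).1
  | snd {c : Clause} : Reachable F Q c → c ∉ F → Reachable F Q (premises Q c).2

def reachableClauses (F : CFormula) (Q : List Clause) : Finset Clause :=
  Q.toFinset.filter (Reachable F Q)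

namespace IsResProof

variable {F : CFormula} {Q : List Clause}

theorem exists_isPremisePair (hQ : IsResProof F Q) {c : Clause} (hc : c ∈ Q) (hcF : c ∉ F) :
    ∃ p, IsPremisePair Q c p := by
  have hlt : Q.idxOf c < Q.length := List.idxOf_lt_length_iff.2 hc
  have hget : Q.get ⟨Q.idxOf c, hlt⟩ = c := List.idxOf_get hlt
  rcases hQ.2.2 ⟨Q.idxOf c, hlt⟩ with hax | ⟨j, k, hj, hk, hres⟩
  · exact absurd (hget ▸ hax) hcF
  · refine ⟨(Q.get j, Q.get k), ?_, ?_, hget ▸ hres⟩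
    · exact (Q.idxOf_getElem_le j j.2).trans_lt hj
    · exact (Q.idxOf_getElem_le k k.2).trans_lt hk

theorem isPremisePair_premises (hQ : IsResProof F Q) {c : Clause} (hc : c ∈ Q) (hcF : c ∉ F) :
    IsPremisePair Q c (premises Q c) := by
  rw [premises, dif_pos (hQ.exists_isPremisePair hc hcF)]
  exact Exists.choose_spec _

theorem mem_of_reachable (hQ : IsResProof F Q) {c : Clause} (hc : Reachable F Q c) : c ∈ Q := by
  induction hc with
  | emptyClause => exact List.mem_of_getLast? hQ.2.1
  | fst _ hcF ih =>
    exact List.idxOf_lt_length_iff.1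
      ((hQ.isPremisePair_premises ih hcF).1.trans (List.idxOf_lt_length_iff.2 ih))
  | snd _ hcF ih =>
    exact List.idxOf_lt_length_iff.1
      ((hQ.isPremisePair_premises ih hcF).2.1.trans (List.idxOf_lt_length_iff.2 ih))

theorem satClause_of_reachable (hQ : IsResProof F Q) {m : Model}
    (hm : ∀ c, Reachable F Q c → c ∈ F → SatClause m c) {c : Clause} (hc : Reachable F Q c) :
    SatClause m c := by
  induction hidx : Q.idxOf c using Nat.strong_induction_on generalizing c with
  | _ n ih =>
    by_cases hcF : c ∈ F
    · exact hm c hc hcF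
    obtain ⟨h₁, h₂, hres⟩ := hQ.isPremisePair_premises (hQ.mem_of_reachable hc) hcF
    exact hres.satClause (ih _ (hidx ▸ h₁) (hc.fst hcF) rfl) (ih _ (hidx ▸ h₂) (hc.snd hcF) rfl)

theorem mem_reachableClauses (hQ : IsResProof F Q) {c : Clause} (hc : Reachable F Q c) :
    c ∈ reachableClauses F Q :=
  Finset.mem_filter.2 ⟨List.mem_toFinset.2 (hQ.mem_of_reachable hc), hc⟩

theorem card_reachableClauses_le (hQ : IsResProof F Q) :
    (reachableClauses F Q).card ≤ 2 * (reachableClauses F Q \ F).card + 1 := by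
  refine card_le_two_mul_card_sdiff_add_one emptyClause (premises Q) fun c hc => ?_
  cases (Finset.mem_filter.1 hc).2 with
  | emptyClause => exact Or.inl rfl
  | fst hd hdF =>
    exact Or.inr ⟨_, Finset.mem_sdiff.2 ⟨hQ.mem_reachableClauses hd, hdF⟩, Or.inl rfl⟩
  | snd hd hdF =>
    exact Or.inr ⟨_, Finset.mem_sdiff.2 ⟨hQ.mem_reachableClauses hd, hdF⟩, Or.inr rfl⟩

end IsResProof

theorem MinimallyUnsat.subset_reachableClauses {F : CFormula} (hF : MinimallyUnsat F)
    {Q : List Clause} (hQ : IsResProof F Q) : F ⊆ reachableClauses F Q := by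
  intro ω hω
  by_contra hωR
  obtain ⟨m, hm⟩ := hF.2 ω hω
  refine not_satClause_emptyClause m (hQ.satClause_of_reachable (fun c hc hcF => ?_) .emptyClause)
  refine hm c (Finset.mem_erase.2 ⟨?_, hcF⟩)
  rintro rfl
  exact hωR (hQ.mem_reachableClauses hc)

/-- MUS proof-length lower bound. -/
theorem mus_proof_length_bound (F : CFormula) (hF : MinimallyUnsat F)
    (Q : List Clause) (hQ : IsResProof F Q) :
    (∀ ω ∈ F, ω ∈ Q) ∧ F.card - 1 ≤ (Q.toFinset \ F).card ∧
    2 * F.card - 1 ≤ Q.length := by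
  set R := reachableClauses F Q
  have hFR : F ⊆ R := hF.subset_reachableClauses hQ
  have hRQ : R ⊆ Q.toFinset := Finset.filter_subset _ _
  have hR : R.card ≤ 2 * (R \ F).card + 1 := hQ.card_reachableClauses_le
  have hRsplit : (R \ F).card + F.card = R.card := Finset.card_sdiff_add_card_eq_card hFR
  have hQsplit : (Q.toFinset \ F).card + F.card = Q.toFinset.card :=
    Finset.card_sdiff_add_card_eq_card (hFR.trans hRQ)
  have hderived : (R \ F).card ≤ (Q.toFinset \ F).card :=
    Finset.card_le_card (Finset.sdiff_subset_sdiff hRQ subset_rfl)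
  have hlength : Q.toFinset.card ≤ Q.length := Q.toFinset_card_le
  exact ⟨fun ω hω => List.mem_toFinset.1 (hRQ (hFR hω)), by omega, by omega⟩

end
end

section
/- Frontier invariance of the smallest unsatisfiable subset: let F be an UNSAT formula and U ⊆ Frontier(F). Then min{#S : U ⊆ S ⊆ F, S is UNSAT} = min{#S : U ⊆ S ⊆ Frontier(F), S is UNSAT}. -/
open scoped Classical

noncomputable section

lemma exists_mem_frontier_subset_s18 {F : CFormula} {ω : Clause} (hω : ω ∈ F) :
    ∃ ω' ∈ Frontier F, ω'.1 ⊆ ω.1 := by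
  by_cases h : ∃ ω'' ∈ F, ω''.1 ⊂ ω.1
  · obtain ⟨ω'', hω'', hsub⟩ := h
    obtain ⟨ω', hω', hsub'⟩ := exists_mem_frontier_subset_s18 hω''
    exact ⟨ω', hω', hsub'.trans hsub.subset⟩
  · exact ⟨ω, Finset.mem_filter.2 ⟨hω, h⟩, subset_rfl⟩
termination_by ω.1.card
decreasing_by exact Finset.card_lt_card hsub

lemma frontier_subset (F : CFormula) : Frontier F ⊆ F := Finset.filter_subset _ _

lemma Unsat.of_forall_exists_subset {S T : CFormula} (hS : Unsat S)
    (hST : ∀ ω ∈ S, ∃ ω' ∈ T, ω'.1 ⊆ ω.1) : Unsat T := by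
  rintro ⟨m, hm⟩
  refine hS ⟨m, fun ω hω => ?_⟩
  obtain ⟨ω', hω'T, hsub⟩ := hST ω hω
  obtain ⟨l, hl, hml⟩ := hm ω' hω'T
  exact ⟨l, hsub hl, hml⟩

/-- Send each clause of `S` to a frontier clause it contains, fixing frontier clauses: the image
keeps `U`, is subsumed clause by clause and so stays unsatisfiable, and is no larger. -/
lemma exists_unsat_frontier_subset_card_le {F S U : CFormula} (hSF : S ⊆ F) (hS : Unsat S)
    (hUS : U ⊆ S) (hU : U ⊆ Frontier F) :
    ∃ S' : CFormula, U ⊆ S' ∧ S' ⊆ Frontier F ∧ Unsat S' ∧ S'.card ≤ S.card := by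
  have hrep : ∀ ω ∈ F, ∃ ω' ∈ Frontier F, ω'.1 ⊆ ω.1 ∧ (ω ∈ Frontier F → ω' = ω) := by
    intro ω hω
    by_cases hfr : ω ∈ Frontier F
    · exact ⟨ω, hfr, subset_rfl, fun _ => rfl⟩
    · obtain ⟨ω', hω', hsub⟩ := exists_mem_frontier_subset_s18 hω
      exact ⟨ω', hω', hsub, fun h => absurd h hfr⟩
  choose! f hf_mem hf_sub hf_fix using hrep
  refine ⟨S.image f, fun u hu => ?_, ?_, ?_, Finset.card_image_le⟩
  · exact Finset.mem_image.2 ⟨u, hUS hu, hf_fix u (frontier_subset F (hU hu)) (hU hu)⟩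
  · simpa only [Finset.image_subset_iff] using fun ω hω => hf_mem ω (hSF hω)
  · exact hS.of_forall_exists_subset fun ω hω =>
      ⟨f ω, Finset.mem_image_of_mem f hω, hf_sub ω (hSF hω)⟩

lemma Nat.sInf_eq_of_subset_of_forall_exists_le {A B : Set ℕ} (hAB : A ⊆ B)
    (hBA : ∀ b ∈ B, ∃ a ∈ A, a ≤ b) : sInf A = sInf B := by
  rcases B.eq_empty_or_nonempty with rfl | hB
  · rw [Set.subset_empty_iff.1 hAB]
  obtain ⟨a, ha, hab⟩ := hBA _ (Nat.sInf_mem hB)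
  have hA : A.Nonempty := ⟨a, ha⟩
  exact le_antisymm ((Nat.sInf_le ha).trans hab) (Nat.sInf_le (hAB (Nat.sInf_mem hA)))

theorem smus_frontier_invariance_general (F : CFormula) (U : CFormula)
    (hU : U ⊆ Frontier F) :
    sInf {k : ℕ | ∃ S : CFormula, U ⊆ S ∧ S ⊆ F ∧ Unsat S ∧ k = S.card} =
    sInf {k : ℕ | ∃ S : CFormula, U ⊆ S ∧ S ⊆ Frontier F ∧ Unsat S ∧ k = S.card} := by
  refine (Nat.sInf_eq_of_subset_of_forall_exists_le ?_ ?_).symm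
  · rintro _ ⟨S, hUS, hSF, hS, rfl⟩
    exact ⟨S, hUS, hSF.trans (frontier_subset F), hS, rfl⟩
  · rintro _ ⟨S, hUS, hSF, hS, rfl⟩
    obtain ⟨S', hUS', hS'F, hS', hcard⟩ := exists_unsat_frontier_subset_card_le hSF hS hUS hU
    exact ⟨S'.card, ⟨S', hUS', hS'F, hS', rfl⟩, hcard⟩

/-- Frontier invariance of the smallest unsatisfiable subset. -/
theorem smus_frontier_invariance (F : CFormula) (hF : Unsat F) (U : CFormula)
    (hU : U ⊆ Frontier F) :
    sInf {k : ℕ | ∃ S : CFormula, U ⊆ S ∧ S ⊆ F ∧ Unsat S ∧ k = S.card} =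
    sInf {k : ℕ | ∃ S : CFormula, U ⊆ S ∧ S ⊆ Frontier F ∧ Unsat S ∧ k = S.card} :=
  smus_frontier_invariance_general F U hU

end
end
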